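/- arXiv:2210.09665 — 3 statements merged into one kernel-verified Lean document; each statement's English description precedes it below -/
import Mathlib

section
/- Every nonzero vector s in the subspace K = {u ∈ ℝⁿ : aᵀu = 0} (with a having no zero entries) can be written as a sum s = Σ_t s^t of vectors each having at most two nonzero entries, each lying in K, and each conformal to s (supp(s^t) ⊆ supp(s), s^t_i s_i ≥ 0 for all i). -/
/-!
Put `w i = a i * s i`. Since `∑ w = aᵀs = 0`, the positive parts of `w` carry the same total
mass `M` as the negative parts, and the product plan `c p q = w⁺ p * w⁻ q / M` transports the
one onto the other: its marginals are `w⁺` and `w⁻`. A unit of mass sent from `p` to `q` is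
realised in `K` by the vector `e_p / a p - e_q / a q`. Weighting it by `c p q` gives a vector
supported on `{p, q}` that is conformal to `s` (`c p q ≠ 0` forces `a p * s p > 0 > a q * s q`),
and summing over all pairs recovers `(w⁺ - w⁻) / a = s`.
-/

open Finset

lemma sum_posPart_eq_sum_negPart {ι α : Type*} [Fintype ι] [AddCommGroup α] [Lattice α]
    [AddLeftMono α] {w : ι → α} (hw : ∑ i, w i = 0) : ∑ i, (w i)⁺ = ∑ i, (w i)⁻ := by
  rw [← sub_eq_zero, ← sum_sub_distrib]
  simpa only [posPart_sub_negPart] using hw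

lemma card_filter_single_add_single_ne_zero_le_two {ι M : Type*} [Fintype ι] [DecidableEq ι]
    [AddZeroClass M] [DecidableEq M] (p q : ι) (x y : M) :
    #{i | (Pi.single p x + Pi.single q y : ι → M) i ≠ 0} ≤ 2 := by
  refine (card_le_card fun i hi => ?_).trans (card_le_two (a := p) (b := q))
  contrapose! hi
  simp_all

section Conformal

variable {ι R : Type*} [Semiring R] [PartialOrder R]

def IsConformal (u s : ι → R) : Prop :=
  (∀ i, s i = 0 → u i = 0) ∧ ∀ i, 0 ≤ u i * s i

lemma IsConformal.add [IsOrderedRing R] {u v s : ι → R} (hu : IsConformal u s)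
    (hv : IsConformal v s) : IsConformal (u + v) s :=
  ⟨fun i hi => by simp [hu.1 i hi, hv.1 i hi],
    fun i => by simpa only [Pi.add_apply, add_mul] using add_nonneg (hu.2 i) (hv.2 i)⟩

lemma isConformal_single [DecidableEq ι] {s : ι → R} {p : ι} {x : R}
    (h0 : s p = 0 → x = 0) (hx : 0 ≤ x * s p) : IsConformal (Pi.single p x) s := by
  refine ⟨fun i hi => ?_, fun i => ?_⟩ <;> rcases eq_or_ne i p with rfl | hip
  · simpa using h0 hi
  · simp [hip]
  · simpa using hx
  · simp [hip]

end Conformal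

section Field

variable {ι 𝕜 : Type*} [Field 𝕜] [LinearOrder 𝕜]

section Ordered

variable [IsStrictOrderedRing 𝕜]

lemma posPart_mul_mul_div_nonneg (x y : 𝕜) : 0 ≤ (x * y)⁺ * (y / x) := by
  rcases le_total (x * y) 0 with h | h
  · simp [posPart_eq_zero.2 h]
  · have hdiv : y / x = x * y / x ^ 2 := by
      rcases eq_or_ne x 0 with rfl | hx
      · simp
      · field_simp
    rw [hdiv]
    exact mul_nonneg (posPart_nonneg _) (div_nonneg h (sq_nonneg x))

lemma negPart_mul_mul_div_nonpos (x y : 𝕜) : (x * y)⁻ * (y / x) ≤ 0 := by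
  have := posPart_mul_mul_div_nonneg x (-y)
  rwa [mul_neg, posPart_neg, neg_div, mul_neg, neg_nonneg] at this

lemma mul_sum_div_sum_of_nonneg [Fintype ι] {f : ι → 𝕜} (hf : ∀ i, 0 ≤ f i) (i : ι) :
    f i * (∑ j, f j) / ∑ j, f j = f i := by
  rcases eq_or_ne (∑ j, f j) 0 with h | h
  · simp [(sum_eq_zero_iff_of_nonneg fun j _ => hf j).1 h i (mem_univ i)]
  · exact mul_div_cancel_right₀ _ h

end Ordered

variable [Fintype ι]

def productCoupling (w : ι → 𝕜) (p q : ι) : 𝕜 := (w p)⁺ * (w q)⁻ / ∑ j, (w j)⁺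

lemma sum_productCoupling_right [IsStrictOrderedRing 𝕜] {w : ι → 𝕜} (hw : ∑ j, w j = 0)
    (p : ι) : ∑ q, productCoupling w p q = (w p)⁺ := by
  simp_rw [productCoupling, ← sum_div, ← mul_sum, ← sum_posPart_eq_sum_negPart hw]
  exact mul_sum_div_sum_of_nonneg (fun j => posPart_nonneg (w j)) p

lemma sum_productCoupling_left [IsStrictOrderedRing 𝕜] {w : ι → 𝕜} (hw : ∑ j, w j = 0)
    (q : ι) : ∑ p, productCoupling w p q = (w q)⁻ := by
  simp_rw [productCoupling, ← sum_div, ← sum_mul, sum_posPart_eq_sum_negPart hw]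
  rw [mul_comm]
  exact mul_sum_div_sum_of_nonneg (fun j => negPart_nonneg (w j)) q

variable [DecidableEq ι]

def pairPart (a s : ι → 𝕜) (p q : ι) : ι → 𝕜 :=
  Pi.single p (productCoupling (a * s) p q / a p) +
    Pi.single q (-(productCoupling (a * s) p q / a q))

variable {a s : ι → 𝕜}

lemma card_filter_pairPart_ne_zero_le_two (p q : ι) : #{i | pairPart a s p q i ≠ 0} ≤ 2 :=
  card_filter_single_add_single_ne_zero_le_two p q _ _

lemma dotProduct_pairPart {p q : ι} (hp : a p ≠ 0) (hq : a q ≠ 0) :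
    a ⬝ᵥ pairPart a s p q = 0 := by
  rw [pairPart, dotProduct_add, dotProduct_single, dotProduct_single, mul_div_cancel₀ _ hp,
    mul_neg, mul_div_cancel₀ _ hq, add_neg_cancel]

variable [IsStrictOrderedRing 𝕜]

lemma isConformal_pairPart (p q : ι) : IsConformal (pairPart a s p q) s := by
  have hM : 0 ≤ ∑ j, (a j * s j)⁺ := sum_nonneg fun j _ => posPart_nonneg _
  refine (isConformal_single (fun hp => ?_) ?_).add (isConformal_single (fun hq => ?_) ?_)
  · simp [productCoupling, hp]
  · calc 0 ≤ (a q * s q)⁻ / (∑ j, (a j * s j)⁺) * ((a p * s p)⁺ * (s p / a p)) :=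
          mul_nonneg (div_nonneg (negPart_nonneg _) hM) (posPart_mul_mul_div_nonneg _ _)
      _ = _ := by simp only [productCoupling, Pi.mul_apply]; ring
  · simp [productCoupling, hq]
  · calc 0 ≤ -((a p * s p)⁺ / (∑ j, (a j * s j)⁺) * ((a q * s q)⁻ * (s q / a q))) :=
          neg_nonneg.2 (mul_nonpos_of_nonneg_of_nonpos (div_nonneg (posPart_nonneg _) hM)
            (negPart_mul_mul_div_nonpos _ _))
      _ = _ := by simp only [productCoupling, Pi.mul_apply]; ring

lemma sum_sum_pairPart (ha : ∀ i, a i ≠ 0) (hs : a ⬝ᵥ s = 0) :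
    ∑ p, ∑ q, pairPart a s p q = s := by
  ext i
  simp only [pairPart, Finset.sum_apply, Pi.add_apply, sum_add_distrib]
  rw [sum_comm]
  simp only [Fintype.sum_pi_single, sum_neg_distrib, ← sum_div,
    sum_productCoupling_right (w := a * s) hs, sum_productCoupling_left (w := a * s) hs]
  rw [← sub_eq_add_neg, ← sub_div, posPart_sub_negPart, Pi.mul_apply,
    mul_div_cancel_left₀ _ (ha i)]

end Field

theorem stmt_10_general (n : ℕ) (a : Fin n → ℝ) (ha : ∀ i, a i ≠ 0)
    (s : Fin n → ℝ) (hsK : (∑ i, a i * s i) = 0) :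
    ∃ (r : ℕ) (v : Fin r → (Fin n → ℝ)),
      s = (∑ t, v t) ∧
      ∀ t, ((univ.filter fun i => v t i ≠ 0).card ≤ 2) ∧
        (∑ i, a i * v t i) = 0 ∧
        (∀ i, s i = 0 → v t i = 0) ∧
        (∀ i, 0 ≤ v t i * s i) := by
  let e : Fin (n * n) ≃ Fin n × Fin n := finProdFinEquiv.symm
  refine ⟨n * n, fun t => pairPart a s (e t).1 (e t).2, ?_, fun t => ?_⟩
  · rw [e.sum_comp (fun pq => pairPart a s pq.1 pq.2), Fintype.sum_prod_type,
      sum_sum_pairPart ha hsK]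
  · exact ⟨card_filter_pairPart_ne_zero_le_two _ _, dotProduct_pairPart (ha _) (ha _),
      isConformal_pairPart _ _⟩

/-- every nonzero vector s in K = {u : aᵀu = 0}, with a having no
zero entries, decomposes as a sum of vectors of K, each with at most two nonzero
entries, and each conformal to s. -/
theorem stmt_10 (n : ℕ) (a : Fin n → ℝ) (ha : ∀ i, a i ≠ 0)
    (s : Fin n → ℝ) (hs : s ≠ 0) (hsK : (∑ i, a i * s i) = 0) :
    ∃ (r : ℕ) (v : Fin r → (Fin n → ℝ)),
      s = (∑ t, v t) ∧
      ∀ t, ((univ.filter fun i => v t i ≠ 0).card ≤ 2) ∧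
        (∑ i, a i * v t i) = 0 ∧
        (∀ i, s i = 0 → v t i = 0) ∧
        (∀ i, 0 ≤ v t i * s i) :=
  stmt_10_general n a ha s hsK
end

section
/- Let h : ℝⁿ → ℝ be of the form h(x) = Σ_j h_j(x_j) with each h_j : ℝ → ℝ convex. Let d = Σ_{t=1}^r d^t where each nonzero d^t is conformal to d (supp(d^t) ⊆ supp(d) and d^t_j d_j ≥ 0 for all j). Then h(x + d) − h(x) ≥ Σ_{t=1}^r (h(x + d^t) − h(x)) for all x in the domain. -/
/-!
Both sides split as sums over the coordinates, so it suffices to treat one convex function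
`f : ℝ → ℝ`. There conformality means every step `dᵗⱼ` is a fraction `μₜ = dᵗⱼ / dⱼ ∈ [0, 1]`
of `dⱼ`, with `∑ₜ μₜ = 1`. Convexity on the segment from `xⱼ` to `xⱼ + dⱼ` bounds the increment
of `f` over `μₜ dⱼ` by `μₜ` times its increment over `dⱼ`, and summing over `t` gives the claim.
-/

open Finset

theorem ConvexOn.map_add_smul_sub_le {E : Type*} [AddCommGroup E] [Module ℝ E] {s : Set E}
    {f : E → ℝ} (hf : ConvexOn ℝ s f) {x a : E} (hx : x ∈ s) (hxa : x + a ∈ s) {μ : ℝ}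
    (hμ₀ : 0 ≤ μ) (hμ₁ : μ ≤ 1) :
    f (x + μ • a) - f x ≤ μ * (f (x + a) - f x) := by
  have hconv := hf.2 hx hxa (sub_nonneg.2 hμ₁) hμ₀ (sub_add_cancel 1 μ)
  have hpt : (1 - μ) • x + μ • (x + a) = x + μ • a := by
    rw [smul_add, ← add_assoc, ← add_smul, sub_add_cancel, one_smul]
  rw [hpt, smul_eq_mul, smul_eq_mul] at hconv
  linarith

theorem ConvexOn.sum_map_add_smul_sub_le {E ι : Type*} [AddCommGroup E] [Module ℝ E]
    {s : Set E} {f : E → ℝ} (hf : ConvexOn ℝ s f) {x a : E} (hx : x ∈ s) (hxa : x + a ∈ s)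
    {t : Finset ι} {μ : ι → ℝ} (hμ₀ : ∀ i ∈ t, 0 ≤ μ i) (hμ : ∑ i ∈ t, μ i = 1) :
    ∑ i ∈ t, (f (x + μ i • a) - f x) ≤ f (x + a) - f x :=
  calc ∑ i ∈ t, (f (x + μ i • a) - f x) ≤ ∑ i ∈ t, μ i * (f (x + a) - f x) :=
        sum_le_sum fun i hi => hf.map_add_smul_sub_le hx hxa (hμ₀ i hi)
          (hμ ▸ single_le_sum hμ₀ hi)
    _ = f (x + a) - f x := by rw [← sum_mul, hμ, one_mul]

theorem ConvexOn.sum_sub_le_of_mul_sum_nonneg {ι : Type*} {f : ℝ → ℝ}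
    (hf : ConvexOn ℝ Set.univ f) (x : ℝ) {t : Finset ι} {a : ι → ℝ} (hsign : ∀ i ∈ t, 0 ≤ a i * ∑ j ∈ t, a j)
    (hzero : ∑ j ∈ t, a j = 0 → ∀ i ∈ t, a i = 0) :
    ∑ i ∈ t, (f (x + a i) - f x) ≤ f (x + ∑ j ∈ t, a j) - f x := by
  set A := ∑ j ∈ t, a j
  rcases eq_or_ne A 0 with hA | hA
  · rw [hA, sum_eq_zero fun i hi => by simp [hzero hA i hi]]
    simp
  have hsplit : ∀ i, a i = (a i / A) • A := fun i => (div_mul_cancel₀ (a i) hA).symm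
  calc ∑ i ∈ t, (f (x + a i) - f x) = ∑ i ∈ t, (f (x + (a i / A) • A) - f x) := by
        simp_rw [← hsplit]
    _ ≤ f (x + A) - f x :=
        hf.sum_map_add_smul_sub_le (Set.mem_univ _) (Set.mem_univ _)
          (fun i hi => div_nonneg_iff.2 (mul_nonneg_iff.1 (hsign i hi)))
          (by rw [← sum_div, div_self hA])

/-- Tseng–Yun separable-function inequality: for a separable
convex function h(x) = Σ_j h_j(x_j) and a conformal decomposition d = Σ_t dᵗ,
one has h(x + d) − h(x) ≥ Σ_t (h(x + dᵗ) − h(x)). -/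
theorem stmt_11 (n : ℕ) (hj : Fin n → ℝ → ℝ)
    (hconvex : ∀ j, ConvexOn ℝ Set.univ (hj j))
    (h : (Fin n → ℝ) → ℝ) (hh : ∀ x, h x = ∑ j, hj j (x j))
    (r : ℕ) (d : Fin n → ℝ) (ds : Fin r → (Fin n → ℝ))
    (hsum : d = ∑ t, ds t)
    (hconf : ∀ t, ds t ≠ 0 →
      (∀ j, d j = 0 → ds t j = 0) ∧ (∀ j, 0 ≤ ds t j * d j)) :
    ∀ x : Fin n → ℝ, h (x + d) - h x ≥ ∑ t, (h (x + ds t) - h x) := by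
  intro x
  have hcoord : ∀ j, ∑ t, ds t j = d j := fun j => by rw [hsum, Finset.sum_apply]
  have hconf_coord : ∀ j t, 0 ≤ ds t j * d j ∧ (d j = 0 → ds t j = 0) := by
    intro j t
    by_cases ht : ds t = 0
    · simp [ht]
    · exact ⟨(hconf t ht).2 j, (hconf t ht).1 j⟩
  simp only [hh, Pi.add_apply, ge_iff_le, ← sum_sub_distrib]
  rw [sum_comm]
  refine sum_le_sum fun j _ => ?_
  have hinc := (hconvex j).sum_sub_le_of_mul_sum_nonneg (x j) (t := univ) (a := fun t => ds t j)
    (fun t _ => hcoord j ▸ (hconf_coord j t).1) (fun h0 t _ => (hconf_coord j t).2 (hcoord j ▸ h0))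
  rwa [hcoord j] at hinc
end

section
/- Let x ∈ P, J ⊆ [n], and let u (with corresponding d = u − x_J) satisfy the KKT conditions of the subproblem: L·d + ∇_J f(x) + λ a_J − γ + δ = 0 with γ, δ ≥ 0, γ_j(u_j − e_j) = 0, δ_j(g_j − u_j) = 0 for j ∈ J, e_J ≤ u ≤ g_J, and ⟨a_J, d⟩ = 0. If moreover f(x + d_J) ≤ f(x) + ⟨∇_J f(x), d⟩ + (L/2)‖d‖² (the descent inequality), then f(x + d_J) ≤ f(x) − (L/2)‖d‖² − γᵀ(x_J − e_J) − δᵀ(g_J − x_J) ≤ f(x). -/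
/-!
Pairing the stationarity equation with `d` and using complementarity (with `u = x + d` on `J`)
gives `L‖d‖² + ⟨∇_J f(x), d⟩ + γᵀ(x_J − e_J) + δᵀ(g_J − x_J) = 0`, the multiplier term vanishing
because `⟨a_J, d⟩ = 0`. Substituting `⟨∇_J f(x), d⟩` into the descent inequality gives the first
bound; the second holds because `x ∈ P` and `γ, δ ≥ 0` make all subtracted terms nonnegative.
-/

open Finset

section KKT

variable {ι : Type*} (J : Finset ι) (L lam : ℝ) (grad a d u x e g γ δ : ι → ℝ)

theorem kkt_pairing_with_step
    (hd : ∀ j ∈ J, d j = u j - x j)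
    (hstat : ∀ j ∈ J, L * d j + grad j + lam * a j - γ j + δ j = 0)
    (hcγ : ∀ j ∈ J, γ j * (u j - e j) = 0)
    (hcδ : ∀ j ∈ J, δ j * (g j - u j) = 0)
    (had : ∑ j ∈ J, a j * d j = 0) :
    L * ∑ j ∈ J, d j ^ 2 + ∑ j ∈ J, grad j * d j
      + ∑ j ∈ J, γ j * (x j - e j) + ∑ j ∈ J, δ j * (g j - x j) = 0 := by
  have hcoord : ∀ j ∈ J, L * d j ^ 2 + grad j * d j + γ j * (x j - e j) + δ j * (g j - x j)
      = -(lam * (a j * d j)) := fun j hj => by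
    linear_combination d j * hstat j hj + hcγ j hj + hcδ j hj + (γ j - δ j) * hd j hj
  calc L * ∑ j ∈ J, d j ^ 2 + ∑ j ∈ J, grad j * d j
        + ∑ j ∈ J, γ j * (x j - e j) + ∑ j ∈ J, δ j * (g j - x j)
      = ∑ j ∈ J, (L * d j ^ 2 + grad j * d j + γ j * (x j - e j) + δ j * (g j - x j)) := by
        simp only [sum_add_distrib, mul_sum]
    _ = -(lam * ∑ j ∈ J, a j * d j) := by rw [sum_congr rfl hcoord, sum_neg_distrib, mul_sum]
    _ = 0 := by rw [had, mul_zero, neg_zero]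

end KKT

theorem stmt_14_general (n : ℕ) (J : Finset (Fin n)) (f : (Fin n → ℝ) → ℝ)
    (a e gv : Fin n → ℝ) (b : ℝ) (grad : Fin n → ℝ) (L : ℝ) (hL : 0 < L)
    (x : Fin n → ℝ) (hxP : (∑ i, a i * x i) = b ∧ ∀ i, e i ≤ x i ∧ x i ≤ gv i)
    (u d : Fin n → ℝ)
    (hd : ∀ j ∈ J, d j = u j - x j)
    (lam : ℝ) (γ δ : Fin n → ℝ)
    (hγ : ∀ j ∈ J, 0 ≤ γ j) (hδ : ∀ j ∈ J, 0 ≤ δ j)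
    (hstat : ∀ j ∈ J, L * d j + grad j + lam * a j - γ j + δ j = 0)
    (hcγ : ∀ j ∈ J, γ j * (u j - e j) = 0)
    (hcδ : ∀ j ∈ J, δ j * (gv j - u j) = 0)
    (had : (∑ j ∈ J, a j * d j) = 0)
    (hdesc : f (x + d) ≤ f x + (∑ j ∈ J, grad j * d j) +
      L / 2 * ∑ j ∈ J, d j ^ 2) :
    f (x + d) ≤ f x - L / 2 * (∑ j ∈ J, d j ^ 2)
        - (∑ j ∈ J, γ j * (x j - e j)) - (∑ j ∈ J, δ j * (gv j - x j)) ∧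
    f (x + d) ≤ f x := by
  have hpair := kkt_pairing_with_step J L lam grad a d u x e gv γ δ hd hstat hcγ hcδ had
  have hd2 : 0 ≤ L / 2 * ∑ j ∈ J, d j ^ 2 :=
    mul_nonneg (by positivity) (sum_nonneg fun j _ => sq_nonneg (d j))
  have hγx : 0 ≤ ∑ j ∈ J, γ j * (x j - e j) :=
    sum_nonneg fun j hj => mul_nonneg (hγ j hj) (sub_nonneg.2 (hxP.2 j).1)
  have hδx : 0 ≤ ∑ j ∈ J, δ j * (gv j - x j) :=
    sum_nonneg fun j hj => mul_nonneg (hδ j hj) (sub_nonneg.2 (hxP.2 j).2)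
  constructor <;> linarith

/-- the KKT conditions of the subproblem plus the descent
inequality yield f(x + d_J) ≤ f(x) − (L/2)‖d‖² − γᵀ(x_J − e_J) − δᵀ(g_J − x_J)
≤ f(x). Here d is supported on J, grad stands for ∇f(x), gv for the upper
bound vector g. -/
theorem stmt_14 (n : ℕ) (J : Finset (Fin n)) (f : (Fin n → ℝ) → ℝ)
    (a e gv : Fin n → ℝ) (b : ℝ) (grad : Fin n → ℝ) (L : ℝ) (hL : 0 < L)
    (x : Fin n → ℝ) (hxP : (∑ i, a i * x i) = b ∧ ∀ i, e i ≤ x i ∧ x i ≤ gv i)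
    (u d : Fin n → ℝ)
    (hd : ∀ j ∈ J, d j = u j - x j) (hd0 : ∀ j, j ∉ J → d j = 0)
    (lam : ℝ) (γ δ : Fin n → ℝ)
    (hγ : ∀ j ∈ J, 0 ≤ γ j) (hδ : ∀ j ∈ J, 0 ≤ δ j)
    (hstat : ∀ j ∈ J, L * d j + grad j + lam * a j - γ j + δ j = 0)
    (hcγ : ∀ j ∈ J, γ j * (u j - e j) = 0)
    (hcδ : ∀ j ∈ J, δ j * (gv j - u j) = 0)
    (hbox : ∀ j ∈ J, e j ≤ u j ∧ u j ≤ gv j)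
    (had : (∑ j ∈ J, a j * d j) = 0)
    (hdesc : f (x + d) ≤ f x + (∑ j ∈ J, grad j * d j) +
      L / 2 * ∑ j ∈ J, d j ^ 2) :
    f (x + d) ≤ f x - L / 2 * (∑ j ∈ J, d j ^ 2)
        - (∑ j ∈ J, γ j * (x j - e j)) - (∑ j ∈ J, δ j * (gv j - x j)) ∧
    f (x + d) ≤ f x :=
  stmt_14_general n J f a e gv b grad L hL x hxP u d hd lam γ δ hγ hδ hstat hcγ hcδ had hdesc
end
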